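/- Let n ≥ 2, let k ≥ 0 be the exponent of the largest power of 2 dividing n, let n₀ = n / 2^k, and let n₀ = Σ_{i=1}^ℓ 2^{m_i} with m_1 > m_2 > ... > m_{ℓ−1} > m_ℓ = 0 be the binary expansion of n₀, with ℓ > 1. Then for every j with 2 ≤ j ≤ ℓ − 1 such that m_j < m_{j−1} − 1, setting b = 2^k · Σ_{i=1}^{j−1} 2^{m_i − 1}, the pair (n − b, b) belongs to QB(n). -/

import Mathlib

/-- The Colless index of the maximally balanced bifurcating tree with `n` leaves:
`c 1 = 0` and `c n = c ⌈n/2⌉ + c ⌊n/2⌋ + (⌈n/2⌉ - ⌊n/2⌋)` for `n ≥ 2`. -/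
def c : ℕ → ℕ
  | 0 => 0
  | 1 => 0
  | n + 2 => c ((n + 3) / 2) + c ((n + 2) / 2) + ((n + 3) / 2 - (n + 2) / 2)
decreasing_by all_goals omega


lemma c_two_mul (x : ℕ) : c (2 * x) = 2 * c x := by
  match x with
  | 0 => simp [c]
  | x + 1 =>
    rw [show 2 * (x + 1) = 2 * x + 2 by ring, c]
    have h1 : (2 * x + 3) / 2 = x + 1 := by omega
    have h2 : (2 * x + 2) / 2 = x + 1 := by omega
    rw [h1, h2]
    omega

lemma c_odd (x : ℕ) (hx : 1 ≤ x) : c (2 * x + 1) = c (x + 1) + c x + 1 := by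
  obtain ⟨y, rfl⟩ := Nat.exists_eq_add_of_le hx
  rw [show 2 * (1 + y) + 1 = 2 * y + 1 + 2 by ring, c]
  have h1 : (2 * y + 1 + 3) / 2 = y + 2 := by omega
  have h2 : (2 * y + 1 + 2) / 2 = y + 1 := by omega
  rw [h1, h2, show 1 + y + 1 = y + 2 by ring, show 1 + y = y + 1 by ring]
  omega

lemma c_key : ∀ e u r : ℕ, 1 ≤ u → r ≤ 2 ^ e →
    c (2 ^ (e + 1) * u + r) = c (2 ^ e * u + r) + c (2 ^ e * u) + r := by
  intro e
  induction e with
  | zero =>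
    intro u r hu hr
    interval_cases r
    · have : c (2 ^ 1 * u + 0) = 2 * c u := by
        rw [show 2 ^ 1 * u + 0 = 2 * u by ring, c_two_mul]
      rw [this]; simp; omega
    · rw [show 2 ^ 1 * u + 1 = 2 * u + 1 by ring, c_odd _ hu]
      simp
  | succ e ih =>
    intro u r hu hr
    have hpos' : 1 ≤ 2 ^ e * u := Nat.one_le_iff_ne_zero.mpr (by positivity)
    have hpos : 1 ≤ 2 ^ (e + 1) * u := Nat.one_le_iff_ne_zero.mpr (by positivity)
    have h2e : 2 ^ (e + 1) = 2 * 2 ^ e := by ring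
    rcases Nat.even_or_odd r with ⟨r', rfl⟩ | ⟨r', rfl⟩
    · have hr' : r' ≤ 2 ^ e := by omega
      have L1 : c (2 ^ (e + 1 + 1) * u + (r' + r')) = 2 * c (2 ^ (e + 1) * u + r') := by
        rw [show 2 ^ (e + 1 + 1) * u + (r' + r') = 2 * (2 ^ (e + 1) * u + r') by ring, c_two_mul]
      have L2 : c (2 ^ (e + 1) * u + (r' + r')) = 2 * c (2 ^ e * u + r') := by
        rw [show 2 ^ (e + 1) * u + (r' + r') = 2 * (2 ^ e * u + r') by ring, c_two_mul]
      have L3 : c (2 ^ (e + 1) * u) = 2 * c (2 ^ e * u) := by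
        rw [show 2 ^ (e + 1) * u = 2 * (2 ^ e * u) by ring, c_two_mul]
      rw [L1, L2, L3, ih u r' hu hr']
      ring
    · have h1 : r' ≤ 2 ^ e := by omega
      have h2 : r' + 1 ≤ 2 ^ e := by omega
      have L1 : c (2 ^ (e + 1 + 1) * u + (2 * r' + 1))
          = c (2 ^ (e + 1) * u + (r' + 1)) + c (2 ^ (e + 1) * u + r') + 1 := by
        rw [show 2 ^ (e + 1 + 1) * u + (2 * r' + 1) = 2 * (2 ^ (e + 1) * u + r') + 1 by ring,
          c_odd _ (by omega), show 2 ^ (e + 1) * u + r' + 1 = 2 ^ (e + 1) * u + (r' + 1) by ring]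
      have L2 : c (2 ^ (e + 1) * u + (2 * r' + 1))
          = c (2 ^ e * u + (r' + 1)) + c (2 ^ e * u + r') + 1 := by
        rw [show 2 ^ (e + 1) * u + (2 * r' + 1) = 2 * (2 ^ e * u + r') + 1 by ring,
          c_odd _ (by omega), show 2 ^ e * u + r' + 1 = 2 ^ e * u + (r' + 1) by ring]
      have L3 : c (2 ^ (e + 1) * u) = 2 * c (2 ^ e * u) := by
        rw [show 2 ^ (e + 1) * u = 2 * (2 ^ e * u) by ring, c_two_mul]
      rw [L1, L2, L3, ih u (r' + 1) hu h2, ih u r' hu h1]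
      ring

lemma sum_pow_two (t : ℕ) : ∑ i ∈ Finset.range t, 2 ^ i = 2 ^ t - 1 := by
  induction t with
  | zero => simp
  | succ t ih =>
    rw [Finset.sum_range_succ, ih]
    have h1 : 2 ^ (t + 1) = 2 * 2 ^ t := by ring
    have h2 : 1 ≤ 2 ^ t := Nat.one_le_two_pow
    omega


/-- \`QB n\` is the set of pairs \`(n₁, n₂)\` with \`1 ≤ n₂ ≤ n₁\`, \`n₁ + n₂ = n\` and
\`c n₁ + c n₂ + (n₁ - n₂) = c n\`. -/
def QB (n : ℕ) : Set (ℕ × ℕ) :=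
  {p : ℕ × ℕ | 1 ≤ p.2 ∧ p.2 ≤ p.1 ∧ p.1 + p.2 = n ∧ c p.1 + c p.2 + (p.1 - p.2) = c n}

/-- Let `n = 2^k * n₀ ≥ 2` with `n₀` odd, and let `n₀ = Σ_{i=1}^ℓ 2^(m i)` with
`m 1 > ⋯ > m (ℓ-1) > m ℓ = 0` and `ℓ > 1`. Then for every `j` with
`2 ≤ j ≤ ℓ - 1` and `m j < m (j-1) - 1`, setting
`b = 2^k * Σ_{i=1}^{j-1} 2^(m i - 1)`, the pair `(n - b, b)` belongs to `QB n`. -/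
theorem QB_mem_b3 (n k n₀ ℓ : ℕ) (hn : 2 ≤ n) (hn₀ : n = 2 ^ k * n₀)
    (hodd : Odd n₀) (hℓ : 1 < ℓ) (m : ℕ → ℕ)
    (hm : ∀ i j, 1 ≤ i → i < j → j ≤ ℓ → m j < m i) (hml : m ℓ = 0)
    (hexp : n₀ = ∑ i ∈ Finset.Icc 1 ℓ, 2 ^ m i)
    (j : ℕ) (hj2 : 2 ≤ j) (hjl : j ≤ ℓ - 1) (hgap : m j + 1 < m (j - 1)) :
    (n - 2 ^ k * ∑ i ∈ Finset.Icc 1 (j - 1), 2 ^ (m i - 1),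
      2 ^ k * ∑ i ∈ Finset.Icc 1 (j - 1), 2 ^ (m i - 1)) ∈ QB n := by
  --proof
  have hjℓ : j < ℓ := by omega
  set s : ℕ := ∑ i ∈ Finset.Icc 1 (j - 1), 2 ^ (m i - 1) with hs
  set r₀ : ℕ := ∑ i ∈ Finset.Icc j ℓ, 2 ^ m i with hr₀def
  -- every index in Icc 1 (j-1) has large exponent
  have hm1 : ∀ i ∈ Finset.Icc 1 (j - 1), m j + 2 ≤ m i := by
    intro i hi
    rw [Finset.mem_Icc] at hi
    rcases eq_or_lt_of_le hi.2 with h | h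
    · rw [h]; omega
    · have := hm i (j - 1) hi.1 h (by omega)
      omega
  -- 2 * s is the top part
  have h2s : 2 * s = ∑ i ∈ Finset.Icc 1 (j - 1), 2 ^ m i := by
    rw [hs, Finset.mul_sum]
    refine Finset.sum_congr rfl (fun i hi => ?_)
    have h := hm1 i hi
    conv_rhs => rw [show m i = m i - 1 + 1 from by omega]
    rw [pow_succ]
    ring
  -- split the expansion
  have hsplit : n₀ = 2 * s + r₀ := by
    rw [h2s, hexp, hr₀def]
    rw [show Finset.Icc 1 ℓ = Finset.Ioc 0 ℓ by rw [← Finset.Icc_add_one_left_eq_Ioc, zero_add],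
      show Finset.Icc 1 (j - 1) = Finset.Ioc 0 (j - 1) by rw [← Finset.Icc_add_one_left_eq_Ioc, zero_add],
      show Finset.Icc j ℓ = Finset.Ioc (j - 1) ℓ by
        rw [← Finset.Icc_add_one_left_eq_Ioc]; congr 1; omega]
    exact (Finset.sum_Ioc_consecutive _ (by omega) (by omega)).symm
  -- bound on r₀
  have hr₀le : r₀ ≤ 2 ^ (m j + 1) := by
    have hinj : ∀ a ∈ Finset.Icc j ℓ, ∀ b ∈ Finset.Icc j ℓ, m a = m b → a = b := by
      intro a ha b hb hab
      rw [Finset.mem_Icc] at ha hb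
      by_contra hne
      rcases Nat.lt_or_ge a b with h | h
      · have := hm a b (by omega) h hb.2; omega
      · have := hm b a (by omega) (by omega) ha.2; omega
    have himg : (Finset.Icc j ℓ).image m ⊆ Finset.range (m j + 1) := by
      intro d hd
      rw [Finset.mem_image] at hd
      obtain ⟨i, hi, rfl⟩ := hd
      rw [Finset.mem_Icc] at hi
      rw [Finset.mem_range]
      rcases eq_or_lt_of_le hi.1 with h | h
      · subst h; omega
      · have := hm j i (by omega) h hi.2; omega
    calc r₀ = ∑ d ∈ (Finset.Icc j ℓ).image m, 2 ^ d := (Finset.sum_image hinj).symm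
      _ ≤ ∑ d ∈ Finset.range (m j + 1), 2 ^ d := Finset.sum_le_sum_of_subset himg
      _ = 2 ^ (m j + 1) - 1 := sum_pow_two _
      _ ≤ 2 ^ (m j + 1) := Nat.sub_le _ _
  -- s is positive
  have hs1 : 1 ≤ s := by
    have h1m : (1 : ℕ) ∈ Finset.Icc 1 (j - 1) := by rw [Finset.mem_Icc]; omega
    have h3 : 2 ^ (m 1 - 1) ≤ s := by
      simpa using Finset.single_le_sum (f := fun i => 2 ^ (m i - 1))
        (fun i _ => Nat.zero_le _) h1m
    have h2 : 1 ≤ 2 ^ (m 1 - 1) := Nat.one_le_two_pow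
    omega
  -- divisibility
  have hdvd : 2 ^ (m j + 1) ∣ s := by
    refine Finset.dvd_sum (fun i hi => ?_)
    exact pow_dvd_pow 2 (by have := hm1 i hi; omega)
  obtain ⟨u, hsu⟩ := hdvd
  have hu : 1 ≤ u := by
    rcases Nat.eq_zero_or_pos u with h | h
    · rw [h, mul_zero] at hsu; omega
    · exact h
  -- abbreviations
  have hbe : 2 ^ k * s = 2 ^ (k + (m j + 1)) * u := by
    rw [hsu, pow_add]; ring
  have hn2 : n = 2 * (2 ^ (k + (m j + 1)) * u) + 2 ^ k * r₀ := by
    rw [hn₀, hsplit, ← hbe]; ring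
  have hrle : 2 ^ k * r₀ ≤ 2 ^ (k + (m j + 1)) := by
    rw [pow_add]
    exact Nat.mul_le_mul_left _ hr₀le
  have hkey : c n = c (2 ^ (k + (m j + 1)) * u + 2 ^ k * r₀)
      + c (2 ^ (k + (m j + 1)) * u) + 2 ^ k * r₀ := by
    rw [hn2, show 2 * (2 ^ (k + (m j + 1)) * u) + 2 ^ k * r₀
        = 2 ^ (k + (m j + 1) + 1) * u + 2 ^ k * r₀ by ring]
    exact c_key _ u _ hu hrle
  have hbpos : 1 ≤ 2 ^ k * s :=
    le_trans (by norm_num) (Nat.mul_le_mul Nat.one_le_two_pow hs1)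
  refine ⟨hbpos, ?_, ?_, ?_⟩
  · show 2 ^ k * s ≤ n - 2 ^ k * s
    omega
  · show n - 2 ^ k * s + 2 ^ k * s = n
    omega
  · show c (n - 2 ^ k * s) + c (2 ^ k * s) + (n - 2 ^ k * s - 2 ^ k * s) = c n
    have h1 : n - 2 ^ k * s = 2 ^ (k + (m j + 1)) * u + 2 ^ k * r₀ := by omega
    have h2 : n - 2 ^ k * s - 2 ^ k * s = 2 ^ k * r₀ := by omega
    rw [h2, h1, hbe, hkey]
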